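/- The quartic polynomial q = 2x_0^4 + 6x_0x_1x_2x_3 + x_1x_3^3 + x_1^3x_2 + x_2^3x_3 ∈ ℂ[x_0,x_1,x_2,x_3] is nonsingular: the only common zero in ℂ^4 of its four partial derivatives is the origin. -/
import Mathlib

open MvPolynomial

/-- The quartic form `q = 2x₀⁴ + 6x₀x₁x₂x₃ + x₁x₃³ + x₁³x₂ + x₂³x₃`. -/
noncomputable def qQuartic : MvPolynomial (Fin 4) ℂ :=
  2 * X 0 ^ 4 + 6 * (X 0 * X 1 * X 2 * X 3) + X 1 * X 3 ^ 3 +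
    X 1 ^ 3 * X 2 + X 2 ^ 3 * X 3

theorem stmt15 :
    ∀ z : Fin 4 → ℂ,
      (∀ i, MvPolynomial.eval z (MvPolynomial.pderiv i qQuartic) = 0) → z = 0 := by
  intro z h
  have e2 : ∀ i : Fin 4, pderiv i (2 : MvPolynomial (Fin 4) ℂ) = 0 := fun i => by
    rw [← map_ofNat (C : ℂ →+* MvPolynomial (Fin 4) ℂ) 2, pderiv_C]
  have e6 : ∀ i : Fin 4, pderiv i (6 : MvPolynomial (Fin 4) ℂ) = 0 := fun i => by
    rw [← map_ofNat (C : ℂ →+* MvPolynomial (Fin 4) ℂ) 6, pderiv_C]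
  have h0 := h 0
  have h1 := h 1
  have h2 := h 2
  have h3 := h 3
  simp only [qQuartic] at h0 h1 h2 h3
  simp [e2, e6, Pi.single_apply] at h0 h1 h2 h3
  -- h0 : 2 * (4 * z 0 ^ 3) + 6 * (z 3 * (z 2 * z 1)) = 0
  -- h1 : 6 * (z 3 * (z 2 * z 0)) + z 3 ^ 3 + z 2 * (3 * z 1 ^ 2) = 0
  -- h2 : 6 * (z 3 * (z 0 * z 1)) + z 1 ^ 3 + z 3 * (3 * z 2 ^ 2) = 0
  -- h3 : 6 * (z 0 * z 1 * z 2) + z 1 * (3 * z 3 ^ 2) + z 2 ^ 3 = 0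
  set a := z 0 with hA
  set b := z 1 with hB
  set c := z 2 with hC
  set d := z 3 with hD
  have ha : a = 0 := by
    have hP : b * d ^ 3 = 2 * a ^ 4 := by
      linear_combination (b/28) * h1 - (3*c/28) * h2 + (9*d/28) * h3 - (7*a/28) * h0
    have hQ : b ^ 3 * c = 2 * a ^ 4 := by
      linear_combination (9*b/28) * h1 + (c/28) * h2 - (3*d/28) * h3 - (7*a/28) * h0
    have hR : c ^ 3 * d = 2 * a ^ 4 := by
      linear_combination (-3*b/28) * h1 + (9*c/28) * h2 + (d/28) * h3 - (7*a/28) * h0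
    have h8 : b ^ 4 * c ^ 4 * d ^ 4 = 8 * a ^ 12 := by
      linear_combination (b^3*c*c^3*d) * hP + (2*a^4*c^3*d) * hQ + (4*a^8) * hR
    have h9 : 1296 * (b*c*d) ^ 4 = 4096 * a ^ 12 := by
      linear_combination ((6*b*c*d)^3 - (6*b*c*d)^2*(8*a^3) + (6*b*c*d)*(8*a^3)^2
        - (8*a^3)^3) * h0
    have ha12 : a ^ 12 = 0 := by
      linear_combination (-1296/6272) * h8 + (1/6272) * h9
    exact pow_eq_zero_iff (by norm_num) |>.mp ha12
  rw [ha] at h0 h1 h2 h3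
  have hbcd : b * c * d = 0 := by linear_combination (1/6) * h0
  have hbcd' : b = 0 ∧ c = 0 ∧ d = 0 := by
    rcases mul_eq_zero.mp hbcd with hx | hd0
    · rcases mul_eq_zero.mp hx with hb0 | hc0
      · -- b = 0 : d³ = 0 and c³ = 0
        have hd0 : d = 0 := pow_eq_zero_iff (n := 3) (by norm_num) |>.mp
          (by linear_combination h1 - 3 * c * b * hb0 - 6 * c * (0:ℂ) * hb0)
        have hc0 : c = 0 := pow_eq_zero_iff (n := 3) (by norm_num) |>.mp
          (by linear_combination h3 - 3 * d^2 * hb0)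
        exact ⟨hb0, hc0, hd0⟩
      · have hd0 : d = 0 := pow_eq_zero_iff (n := 3) (by norm_num) |>.mp
          (by linear_combination h1 - 3 * b^2 * hc0)
        have hb0 : b = 0 := pow_eq_zero_iff (n := 3) (by norm_num) |>.mp
          (by linear_combination h2 - 3 * c * d * hc0 - 3 * c * 0 * hc0)
        exact ⟨hb0, hc0, hd0⟩
    · have hb0 : b = 0 := pow_eq_zero_iff (n := 3) (by norm_num) |>.mp
        (by linear_combination h2 - 3 * c^2 * hd0)
      have hc0 : c = 0 := pow_eq_zero_iff (n := 3) (by norm_num) |>.mp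
        (by linear_combination h3 - 3 * b * d * hd0 - 3 * b * 0 * hd0)
      exact ⟨hb0, hc0, hd0⟩
  obtain ⟨hb, hc, hd⟩ := hbcd'
  funext i
  fin_cases i <;> simp_all
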